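/- With the Yule model setup, Var(U^{(n)} − τ^{(n)}) = 4(H_{n,2} − 1) − 2H_{n,1}^2/(n-1) + 4H_{n,1}/(n-1) + 6H_{n,2}/(n-1) − 8/(n-1) − 4(H_{n,1} − 1)^2/(n-1)^2, which converges to 2π²/3 − 4 as n → ∞. -/

import Mathlib

/-!
Given `κ_n = k`, the quantity `U⁽ⁿ⁾ - τ⁽ⁿ⁾` is `T_1 + ⋯ + T_k`, a sum of independent exponentials
with mean `H_{k,1}` and variance `H_{k,2}`. As `κ_n` is independent of the `T_i`, the first two
moments of `U⁽ⁿ⁾ - τ⁽ⁿ⁾` are the averages of `H_{k,1}` and `H_{k,2} + H_{k,1}²` against the law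
`P(κ_n = k) ∝ 1/((k+1)(k+2))`, and these averages telescope in closed form. The limit follows from
`H_{n,2} → π²/6` and `H_{n,1} ≤ 1 + log n`.
-/

open MeasureTheory ProbabilityTheory Finset Real Filter Topology
open scoped ENNReal

noncomputable def genHarmonic (r n : ℕ) : ℝ := ∑ i ∈ Icc 1 n, 1 / (i : ℝ) ^ r

lemma genHarmonic_zero_right (r : ℕ) : genHarmonic r 0 = 0 := by simp [genHarmonic]

lemma genHarmonic_succ (r n : ℕ) :
    genHarmonic r (n + 1) = genHarmonic r n + 1 / ((n : ℝ) + 1) ^ r := by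
  rw [genHarmonic, sum_Icc_succ_top (by omega), genHarmonic]
  push_cast; rfl

lemma genHarmonic_one_eq (n : ℕ) : genHarmonic 1 n = ∑ i ∈ Icc 1 n, (1 : ℝ) / i := by
  simp [genHarmonic]

lemma one_le_genHarmonic (r : ℕ) {n : ℕ} (hn : 1 ≤ n) : 1 ≤ genHarmonic r n := by
  simpa [genHarmonic] using single_le_sum (f := fun i : ℕ => 1 / (i : ℝ) ^ r)
    (fun i _ => by positivity) (mem_Icc.mpr ⟨le_rfl, hn⟩)

lemma genHarmonic_one_eq_harmonic (n : ℕ) : genHarmonic 1 n = harmonic n := by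
  induction n with
  | zero => simp [genHarmonic_zero_right]
  | succ n ih => rw [genHarmonic_succ, ih, harmonic_succ]; push_cast; ring

lemma genHarmonic_one_le_one_add_log (n : ℕ) : genHarmonic 1 n ≤ 1 + log n := by
  rw [genHarmonic_one_eq_harmonic]; exact harmonic_le_one_add_log n

lemma tendsto_genHarmonic_two : Tendsto (genHarmonic 2) atTop (𝓝 (π ^ 2 / 6)) := by
  have h := hasSum_zeta_two.tendsto_sum_nat.comp (tendsto_add_atTop_nat 1)
  refine h.congr fun n => ?_
  rw [Function.comp_apply, sum_range_succ', genHarmonic, ← Ico_add_one_right_eq_Icc,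
    sum_Ico_eq_sum_range]
  simp [add_comm]

lemma sum_genHarmonic_one_div (m : ℕ) :
    ∑ k ∈ Icc 1 m, genHarmonic 1 k / (((k : ℝ) + 1) * ((k : ℝ) + 2)) =
      1 - genHarmonic 1 m / ((m : ℝ) + 2) - 1 / ((m : ℝ) + 1) := by
  induction m with
  | zero => simp [genHarmonic_zero_right]
  | succ m ih =>
    rw [sum_Icc_succ_top (by omega), ih, genHarmonic_succ]
    push_cast
    field_simp
    ring

lemma sum_genHarmonic_two_div (m : ℕ) :
    ∑ k ∈ Icc 1 m, genHarmonic 2 k / (((k : ℝ) + 1) * ((k : ℝ) + 2)) =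
      genHarmonic 2 m * ((m : ℝ) + 1) / ((m : ℝ) + 2) + 1 / ((m : ℝ) + 1) - 1 := by
  induction m with
  | zero => simp [genHarmonic_zero_right]
  | succ m ih =>
    rw [sum_Icc_succ_top (by omega), ih, genHarmonic_succ]
    push_cast
    field_simp
    ring

lemma sum_genHarmonic_one_sq_div (m : ℕ) :
    ∑ k ∈ Icc 1 m, genHarmonic 1 k ^ 2 / (((k : ℝ) + 1) * ((k : ℝ) + 2)) =
      genHarmonic 2 m + 1 - genHarmonic 1 m ^ 2 / ((m : ℝ) + 2)
        - 2 * genHarmonic 1 m / ((m : ℝ) + 1) - 1 / ((m : ℝ) + 1) := by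
  induction m with
  | zero => simp [genHarmonic_zero_right]
  | succ m ih =>
    rw [sum_Icc_succ_top (by omega), ih, genHarmonic_succ, genHarmonic_succ]
    push_cast
    field_simp
    ring

noncomputable def sharedPathVariance (n : ℕ) : ℝ :=
  4 * (genHarmonic 2 n - 1) - 2 * genHarmonic 1 n ^ 2 / ((n : ℝ) - 1)
    + 4 * genHarmonic 1 n / ((n : ℝ) - 1) + 6 * genHarmonic 2 n / ((n : ℝ) - 1)
    - 8 / ((n : ℝ) - 1) - 4 * (genHarmonic 1 n - 1) ^ 2 / ((n : ℝ) - 1) ^ 2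

-- `P(κ_n = k)`
noncomputable def yuleWeight (n k : ℕ) : ℝ :=
  (2 * ((n : ℝ) + 1) / ((n : ℝ) - 1)) * (1 / (((k : ℝ) + 1) * ((k : ℝ) + 2)))

lemma yuleWeight_nonneg {n : ℕ} (hn : 1 ≤ n) (k : ℕ) : 0 ≤ yuleWeight n k := by
  have : (1 : ℝ) ≤ n := by exact_mod_cast hn
  unfold yuleWeight
  exact mul_nonneg (div_nonneg (by positivity) (sub_nonneg.mpr this)) (by positivity)

lemma sum_yuleWeight_sub_sq_eq_sharedPathVariance {n : ℕ} (hn : 2 ≤ n) :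
    ∑ k ∈ Icc 1 (n - 1), yuleWeight n k * (genHarmonic 2 k + genHarmonic 1 k ^ 2)
      - (∑ k ∈ Icc 1 (n - 1), yuleWeight n k * genHarmonic 1 k) ^ 2 = sharedPathVariance n := by
  obtain ⟨m, rfl⟩ : ∃ m, n = m + 1 := ⟨n - 1, by omega⟩
  have hm : (m : ℝ) ≠ 0 := by exact_mod_cast (by omega : m ≠ 0)
  have hsum (x : ℕ → ℝ) : ∑ k ∈ Icc 1 m, yuleWeight (m + 1) k * x k =
      2 * ((m : ℝ) + 2) / m * ∑ k ∈ Icc 1 m, x k / (((k : ℝ) + 1) * ((k : ℝ) + 2)) := by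
    rw [mul_sum]
    refine sum_congr rfl fun k _ => ?_
    simp only [yuleWeight]
    push_cast
    ring
  simp only [Nat.add_sub_cancel, hsum, add_div, sum_add_distrib, sum_genHarmonic_one_div,
    sum_genHarmonic_two_div, sum_genHarmonic_one_sq_div, sharedPathVariance, genHarmonic_succ]
  push_cast
  rw [add_sub_cancel_right]
  field_simp
  ring

lemma tendsto_one_add_log_sq_div_sub_one :
    Tendsto (fun x : ℝ => (1 + log x) ^ 2 / (x - 1)) atTop (𝓝 0) := by
  have h (k : ℕ) := tendsto_pow_log_div_mul_add_atTop 1 (-1) k one_ne_zero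
  have := (h 0).add (((h 1).const_mul 2).add (h 2))
  rw [mul_zero, add_zero, add_zero] at this
  exact this.congr fun x => by ring

lemma eventually_one_le_genHarmonic_and_one_le_sub_one :
    ∀ᶠ m : ℕ in atTop, 1 ≤ genHarmonic 1 m ∧ (1 : ℝ) ≤ m - 1 := by
  filter_upwards [eventually_ge_atTop 2] with m hm
  refine ⟨one_le_genHarmonic 1 (by omega), ?_⟩
  rw [le_sub_iff_add_le]; exact_mod_cast hm

lemma tendsto_genHarmonic_one_sq_div :
    Tendsto (fun m : ℕ => genHarmonic 1 m ^ 2 / ((m : ℝ) - 1)) atTop (𝓝 0) := by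
  refine tendsto_of_tendsto_of_tendsto_of_le_of_le' tendsto_const_nhds
    (tendsto_one_add_log_sq_div_sub_one.comp tendsto_natCast_atTop_atTop) ?_ ?_
  all_goals filter_upwards [eventually_one_le_genHarmonic_and_one_le_sub_one] with m ⟨hH, hm⟩
  · exact div_nonneg (sq_nonneg _) (by linarith)
  · exact div_le_div_of_nonneg_right
      (pow_le_pow_left₀ (by linarith) (genHarmonic_one_le_one_add_log m) 2) (by linarith)

lemma tendsto_sharedPathVariance :
    Tendsto sharedPathVariance atTop (𝓝 (2 * π ^ 2 / 3 - 4)) := by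
  have hsq := tendsto_genHarmonic_one_sq_div
  have hinv : Tendsto (fun m : ℕ => 1 / ((m : ℝ) - 1)) atTop (𝓝 0) :=
    tendsto_const_nhds.div_atTop (tendsto_atTop_add_const_right _ (-1) tendsto_natCast_atTop_atTop)
  -- As `1 ≤ H_{m,1}` and `1 ≤ m - 1`, the remaining terms are dominated by `H_{m,1}² / (m - 1)`.
  have hlin : Tendsto (fun m : ℕ => genHarmonic 1 m / ((m : ℝ) - 1)) atTop (𝓝 0) := by
    refine tendsto_of_tendsto_of_tendsto_of_le_of_le' tendsto_const_nhds hsq ?_ ?_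
    all_goals filter_upwards [eventually_one_le_genHarmonic_and_one_le_sub_one] with m ⟨hH, hm⟩
    · exact div_nonneg (by linarith) (by linarith)
    · exact div_le_div_of_nonneg_right (by nlinarith) (by linarith)
  have hsq' : Tendsto (fun m : ℕ => (genHarmonic 1 m - 1) ^ 2 / ((m : ℝ) - 1) ^ 2) atTop
      (𝓝 0) := by
    refine tendsto_of_tendsto_of_tendsto_of_le_of_le' tendsto_const_nhds hsq ?_ ?_
    all_goals filter_upwards [eventually_one_le_genHarmonic_and_one_le_sub_one] with m ⟨hH, hm⟩
    · positivity
    · exact div_le_div₀ (sq_nonneg _) (by nlinarith) (by linarith) (by nlinarith)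
  have := (((((tendsto_genHarmonic_two.sub_const 1).const_mul 4).sub (hsq.const_mul 2)).add
    (hlin.const_mul 4)).add ((tendsto_genHarmonic_two.mul hinv).const_mul 6)).sub
    (hinv.const_mul 8) |>.sub (hsq'.const_mul 4)
  convert this using 2
  · simp only [sharedPathVariance]; ring
  · ring

section ExpMeasure

variable {r : ℝ}

lemma expMeasure_eq_withDensity (r : ℝ) :
    expMeasure r = volume.withDensity fun x => ((gammaPDFReal 1 r x).toNNReal : ℝ≥0∞) := rfl

lemma gammaPDFReal_one_smul (hr : 0 < r) (f : ℝ → ℝ) :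
    (fun x => (gammaPDFReal 1 r x).toNNReal • f x) =
      (Set.Ici 0).indicator fun x => r * exp (-(r * x)) * f x := by
  funext x
  rw [NNReal.smul_def, Real.coe_toNNReal _ (gammaPDFReal_nonneg one_pos hr x), gammaPDFReal]
  by_cases hx : 0 ≤ x <;> simp [hx]

lemma integrable_expMeasure_iff (hr : 0 < r) {f : ℝ → ℝ} :
    Integrable f (expMeasure r) ↔ IntegrableOn (fun x => r * exp (-(r * x)) * f x) (Set.Ioi 0) := by
  rw [expMeasure_eq_withDensity, integrable_withDensity_iff_integrable_smul
    (measurable_gammaPDFReal 1 r).real_toNNReal, gammaPDFReal_one_smul hr,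
    integrable_indicator_iff measurableSet_Ici, integrableOn_Ici_iff_integrableOn_Ioi]

lemma integral_expMeasure (hr : 0 < r) (f : ℝ → ℝ) :
    ∫ x, f x ∂expMeasure r = ∫ x in Set.Ioi 0, r * exp (-(r * x)) * f x := by
  rw [expMeasure_eq_withDensity, integral_withDensity_eq_integral_smul
    (measurable_gammaPDFReal 1 r).real_toNNReal, gammaPDFReal_one_smul hr,
    integral_indicator measurableSet_Ici, integral_Ici_eq_integral_Ioi]

lemma integrable_pow_expMeasure (hr : 0 < r) (k : ℕ) :
    Integrable (fun x => x ^ k) (expMeasure r) := by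
  rw [integrable_expMeasure_iff hr]
  have h := integrableOn_rpow_mul_exp_neg_mul_rpow (p := 1) (s := k) (b := r)
    (by linarith [(Nat.cast_nonneg k : (0 : ℝ) ≤ k)]) one_pos hr
  refine IntegrableOn.congr_fun (h.const_mul r) (fun x _ => ?_) measurableSet_Ioi
  simp only [rpow_one, rpow_natCast]
  ring_nf

lemma integral_pow_expMeasure (hr : 0 < r) (k : ℕ) :
    ∫ x, x ^ k ∂expMeasure r = k.factorial / r ^ k := by
  have h := integral_rpow_mul_exp_neg_mul_Ioi (a := k + 1) (by positivity) hr
  simp only [add_sub_cancel_right, rpow_natCast, Gamma_nat_eq_factorial] at h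
  rw [← Nat.cast_add_one, rpow_natCast] at h
  calc ∫ x, x ^ k ∂expMeasure r
      = r * ∫ x in Set.Ioi 0, x ^ k * exp (-(r * x)) := by
        rw [integral_expMeasure hr, ← integral_const_mul]; congr 1; ext; ring
    _ = k.factorial / r ^ k := by
        rw [h, one_div, inv_pow, pow_succ]; field_simp

lemma memLp_id_expMeasure (hr : 0 < r) : MemLp id 2 (expMeasure r) :=
  (memLp_two_iff_integrable_sq aestronglyMeasurable_id).mpr (integrable_pow_expMeasure hr 2)

lemma integral_id_expMeasure (hr : 0 < r) : ∫ x, x ∂expMeasure r = 1 / r := by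
  simpa using integral_pow_expMeasure hr 1

lemma variance_id_expMeasure (hr : 0 < r) : Var[id; expMeasure r] = 1 / r ^ 2 := by
  have := isProbabilityMeasure_expMeasure hr
  have h2 := integral_pow_expMeasure hr 2
  rw [variance_eq_sub (memLp_id_expMeasure hr)]
  simp only [Pi.pow_apply, id_eq, h2, integral_id_expMeasure hr, Nat.factorial_two]
  field_simp
  norm_num

variable {Ω : Type*} [MeasurableSpace Ω] {P : Measure Ω} {X : Ω → ℝ}

lemma memLp_two_of_hasLaw_expMeasure (hr : 0 < r) (hX : HasLaw X (expMeasure r) P) :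
    MemLp X 2 P :=
  (hX.map_eq ▸ memLp_id_expMeasure hr).comp_of_map hX.aemeasurable

lemma integral_of_hasLaw_expMeasure (hr : 0 < r) (hX : HasLaw X (expMeasure r) P) :
    P[X] = 1 / r := by
  rw [hX.integral_eq, integral_id_expMeasure hr]

lemma variance_of_hasLaw_expMeasure (hr : 0 < r) (hX : HasLaw X (expMeasure r) P) :
    Var[X; P] = 1 / r ^ 2 := by
  rw [hX.variance_eq, variance_id_expMeasure hr]

end ExpMeasure

section SumOfExponentials

variable {Ω ι : Type*} [MeasurableSpace Ω] {P : Measure Ω} {T : ι → Ω → ℝ} {s : Finset ι}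
  {rate : ι → ℝ}

lemma integral_sum_of_hasLaw_expMeasure [IsProbabilityMeasure P] (hrate : ∀ i ∈ s, 0 < rate i)
    (hT : ∀ i ∈ s, HasLaw (T i) (expMeasure (rate i)) P) :
    ∫ ω, ∑ i ∈ s, T i ω ∂P = ∑ i ∈ s, 1 / rate i := by
  rw [integral_finsetSum s fun i hi =>
    (memLp_two_of_hasLaw_expMeasure (hrate i hi) (hT i hi)).integrable one_le_two]
  exact sum_congr rfl fun i hi => integral_of_hasLaw_expMeasure (hrate i hi) (hT i hi)

lemma variance_sum_of_hasLaw_expMeasure (hindep : iIndepFun T P) (hrate : ∀ i ∈ s, 0 < rate i)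
    (hT : ∀ i ∈ s, HasLaw (T i) (expMeasure (rate i)) P) :
    Var[fun ω => ∑ i ∈ s, T i ω; P] = ∑ i ∈ s, 1 / rate i ^ 2 := by
  rw [← sum_fn, IndepFun.variance_sum
    (fun i hi => memLp_two_of_hasLaw_expMeasure (hrate i hi) (hT i hi))
    (fun i _ j _ hij => hindep.indepFun hij)]
  exact sum_congr rfl fun i hi => variance_of_hasLaw_expMeasure (hrate i hi) (hT i hi)

lemma integral_sum_sq_of_hasLaw_expMeasure [IsProbabilityMeasure P] (hindep : iIndepFun T P)
    (hrate : ∀ i ∈ s, 0 < rate i) (hT : ∀ i ∈ s, HasLaw (T i) (expMeasure (rate i)) P) :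
    ∫ ω, (∑ i ∈ s, T i ω) ^ 2 ∂P = ∑ i ∈ s, 1 / rate i ^ 2 + (∑ i ∈ s, 1 / rate i) ^ 2 := by
  have hmem : MemLp (fun ω => ∑ i ∈ s, T i ω) 2 P :=
    memLp_finsetSum s fun i hi => memLp_two_of_hasLaw_expMeasure (hrate i hi) (hT i hi)
  rw [← variance_sum_of_hasLaw_expMeasure hindep hrate hT,
    ← integral_sum_of_hasLaw_expMeasure hrate hT, variance_eq_sub hmem]
  simp

end SumOfExponentials

lemma eq_sum_indicator_singleton_mul {ι : Type*} {s : Finset ι} {j : ι} (hj : j ∈ s) (F : ι → ℝ) :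
    F j = ∑ k ∈ s, ({k} : Set ι).indicator 1 j * F k := by
  classical
  simp [Set.indicator_apply, ite_mul, sum_ite_eq, hj]

section Mixture

variable {Ω ι β : Type*} [MeasurableSpace Ω] [MeasurableSpace ι] [MeasurableSingletonClass ι]
  [MeasurableSpace β] {P : Measure Ω} {κ : Ω → ι} {s : Finset ι}

lemma memLp_comp_of_forall_mem (hκ : Measurable κ) (hκs : ∀ ω, κ ω ∈ s)
    {F : ι → Ω → ℝ} {p : ℝ≥0∞} (hF : ∀ k ∈ s, MemLp (F k) p P) :
    MemLp (fun ω => F (κ ω) ω) p P := by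
  have : (fun ω => F (κ ω) ω) = fun ω => ∑ k ∈ s, (κ ⁻¹' {k}).indicator (F k) ω := by
    ext ω
    rw [eq_sum_indicator_singleton_mul (hκs ω) (fun k => F k ω)]
    refine sum_congr rfl fun k _ => ?_
    by_cases h : κ ω = k <;> simp [h]
  rw [this]
  exact memLp_finsetSum s fun k hk => (hF k hk).indicator (hκ (measurableSet_singleton k))

lemma integral_comp_of_indepFun [IsFiniteMeasure P] {V : Ω → β} (hκ : Measurable κ)
    (hV : AEMeasurable V P) (hind : IndepFun κ V P) (hκs : ∀ ω, κ ω ∈ s) {g : ι → β → ℝ}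
    (hg : ∀ k ∈ s, Measurable (g k)) (hint : ∀ k ∈ s, Integrable (fun ω => g k (V ω)) P) :
    ∫ ω, g (κ ω) (V ω) ∂P = ∑ k ∈ s, P.real {ω | κ ω = k} * ∫ ω, g k (V ω) ∂P := by
  have hind_meas (k : ι) : Measurable (({k} : Set ι).indicator (1 : ι → ℝ)) :=
    measurable_one.indicator (measurableSet_singleton k)
  calc ∫ ω, g (κ ω) (V ω) ∂P
      = ∫ ω, ∑ k ∈ s, ({k} : Set ι).indicator 1 (κ ω) * g k (V ω) ∂P := by
        congr 1; ext ω; exact eq_sum_indicator_singleton_mul (hκs ω) (fun k => g k (V ω))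
    _ = ∑ k ∈ s, ∫ ω, ({k} : Set ι).indicator 1 (κ ω) * g k (V ω) ∂P := by
        refine integral_finsetSum s fun k hk => (hint k hk).bdd_mul (c := 1)
          ((hind_meas k).comp hκ).aestronglyMeasurable (ae_of_all _ fun ω => ?_)
        by_cases h : κ ω = k <;> simp [h]
    _ = ∑ k ∈ s, P.real {ω | κ ω = k} * ∫ ω, g k (V ω) ∂P := by
        refine sum_congr rfl fun k hk => ?_
        rw [hind.integral_fun_comp_mul_comp hκ.aemeasurable hV
          (hind_meas k).aestronglyMeasurable (hg k hk).aestronglyMeasurable]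
        congr 1
        exact integral_indicator_one (hκ (measurableSet_singleton k))

end Mixture

lemma sum_Icc_one_sub_sum_Icc_succ {M : Type*} [AddCommGroup M] (f : ℕ → M) {k n : ℕ}
    (hkn : k ≤ n) : ∑ i ∈ Icc 1 n, f i - ∑ i ∈ Icc (k + 1) n, f i = ∑ i ∈ Icc 1 k, f i := by
  have hIcc (a : ℕ) : Icc 1 a = Ioc 0 a := Icc_add_one_left_eq_Ioc 0 a
  rw [sub_eq_iff_eq_add', hIcc, hIcc, Icc_add_one_left_eq_Ioc, add_comm]
  exact (sum_Ioc_consecutive f (Nat.zero_le k) hkn).symm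

lemma variance_sum_Icc_comp {Ω : Type*} [MeasurableSpace Ω] {P : Measure Ω}
    [IsProbabilityMeasure P] {n : ℕ} {T : ℕ → Ω → ℝ} {κ : Ω → ℕ}
    {s : Finset ℕ} (hTmeas : ∀ i, Measurable (T i)) (hTindep : iIndepFun T P)
    (hTlaw : ∀ i ∈ Icc 1 n, HasLaw (T i) (expMeasure i) P) (hκ : Measurable κ)
    (hκs : ∀ ω, κ ω ∈ s) (hsn : ∀ k ∈ s, k ≤ n) (hindep : IndepFun κ (fun ω i => T i ω) P) :
    Var[fun ω => ∑ i ∈ Icc 1 (κ ω), T i ω; P] =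
      ∑ k ∈ s, P.real {ω | κ ω = k} * (genHarmonic 2 k + genHarmonic 1 k ^ 2)
        - (∑ k ∈ s, P.real {ω | κ ω = k} * genHarmonic 1 k) ^ 2 := by
  have hpos (k : ℕ) : ∀ i ∈ Icc 1 k, (0 : ℝ) < i := fun i hi => by
    have := (mem_Icc.mp hi).1; positivity
  have hlaw (k : ℕ) (hk : k ∈ s) : ∀ i ∈ Icc 1 k, HasLaw (T i) (expMeasure i) P :=
    fun i hi => hTlaw i (Icc_subset_Icc le_rfl (hsn k hk) hi)
  have hmem (k : ℕ) (hk : k ∈ s) : MemLp (fun ω => ∑ i ∈ Icc 1 k, T i ω) 2 P :=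
    memLp_finsetSum _ fun i hi => memLp_two_of_hasLaw_expMeasure (hpos k i hi) (hlaw k hk i hi)
  have hV : Measurable fun ω i => T i ω := measurable_pi_lambda _ hTmeas
  have hg (k : ℕ) : Measurable fun v : ℕ → ℝ => ∑ i ∈ Icc 1 k, v i :=
    Finset.measurable_sum _ fun i _ => measurable_pi_apply i
  have hmean (k : ℕ) (hk : k ∈ s) : ∫ ω, ∑ i ∈ Icc 1 k, T i ω ∂P = genHarmonic 1 k := by
    rw [integral_sum_of_hasLaw_expMeasure (hpos k) (hlaw k hk), genHarmonic_one_eq]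
  have hsq (k : ℕ) (hk : k ∈ s) :
      ∫ ω, (∑ i ∈ Icc 1 k, T i ω) ^ 2 ∂P = genHarmonic 2 k + genHarmonic 1 k ^ 2 := by
    rw [integral_sum_sq_of_hasLaw_expMeasure hTindep (hpos k) (hlaw k hk), genHarmonic_one_eq]
    rfl
  have h1 := (integral_comp_of_indepFun hκ hV.aemeasurable hindep hκs
    (g := fun k v => ∑ i ∈ Icc 1 k, v i) (fun k _ => hg k)
    (fun k hk => (hmem k hk).integrable one_le_two)).trans
    (sum_congr rfl fun k hk => congrArg (_ * ·) (hmean k hk))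
  have h2 := (integral_comp_of_indepFun hκ hV.aemeasurable hindep hκs
    (g := fun k v => (∑ i ∈ Icc 1 k, v i) ^ 2) (fun k _ => (hg k).pow_const 2)
    (fun k hk => (hmem k hk).integrable_sq)).trans
    (sum_congr rfl fun k hk => congrArg (_ * ·) (hsq k hk))
  rw [variance_eq_sub (memLp_comp_of_forall_mem hκ hκs hmem), Pi.pow_def, h1]
  exact congrArg (· - _) h2

theorem variance_shared_path
    {Ω : Type*} [MeasurableSpace Ω] {P : Measure Ω} [IsProbabilityMeasure P]
    (n : ℕ) (hn : 2 ≤ n)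
    (T : ℕ → Ω → ℝ) (κ : Ω → ℕ)
    (hTmeas : ∀ i, Measurable (T i)) (hκmeas : Measurable κ)
    (hTindep : iIndepFun T P)
    (hTdist : ∀ i ∈ Finset.Icc 1 n, P.map (T i) = expMeasure i)
    (hκrange : ∀ ω, κ ω ∈ Finset.Icc 1 (n - 1))
    (hκdist : ∀ k ∈ Finset.Icc 1 (n - 1),
      P {ω | κ ω = k} =
        ENNReal.ofReal ((2 * ((n : ℝ) + 1) / ((n : ℝ) - 1)) *
          (1 / (((k : ℝ) + 1) * ((k : ℝ) + 2)))))
    (hindep : IndepFun κ (fun ω i => T i ω) P)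
    (H1 H2 : ℝ)
    (hH1 : H1 = ∑ i ∈ Finset.Icc 1 n, (1 : ℝ) / i)
    (hH2 : H2 = ∑ i ∈ Finset.Icc 1 n, (1 : ℝ) / (i : ℝ) ^ 2) :
    (variance (fun ω =>
        (∑ i ∈ Finset.Icc 1 n, T i ω) - ∑ i ∈ Finset.Icc (κ ω + 1) n, T i ω) P =
      4 * (H2 - 1) - 2 * H1 ^ 2 / ((n : ℝ) - 1) + 4 * H1 / ((n : ℝ) - 1)
        + 6 * H2 / ((n : ℝ) - 1) - 8 / ((n : ℝ) - 1)
        - 4 * (H1 - 1) ^ 2 / ((n : ℝ) - 1) ^ 2) ∧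
    Filter.Tendsto (fun m : ℕ =>
        4 * ((∑ i ∈ Finset.Icc 1 m, (1 : ℝ) / (i : ℝ) ^ 2) - 1)
          - 2 * (∑ i ∈ Finset.Icc 1 m, (1 : ℝ) / i) ^ 2 / ((m : ℝ) - 1)
          + 4 * (∑ i ∈ Finset.Icc 1 m, (1 : ℝ) / i) / ((m : ℝ) - 1)
          + 6 * (∑ i ∈ Finset.Icc 1 m, (1 : ℝ) / (i : ℝ) ^ 2) / ((m : ℝ) - 1)
          - 8 / ((m : ℝ) - 1)
          - 4 * ((∑ i ∈ Finset.Icc 1 m, (1 : ℝ) / i) - 1) ^ 2 / ((m : ℝ) - 1) ^ 2)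
      Filter.atTop (nhds (2 * Real.pi ^ 2 / 3 - 4)) := by
  have hlaw (i : ℕ) (hi : i ∈ Icc 1 n) : HasLaw (T i) (expMeasure i) P :=
    ⟨(hTmeas i).aemeasurable, hTdist i hi⟩
  have hprob (k : ℕ) (hk : k ∈ Icc 1 (n - 1)) : P.real {ω | κ ω = k} = yuleWeight n k := by
    rw [measureReal_def, hκdist k hk]
    exact ENNReal.toReal_ofReal (yuleWeight_nonneg (by omega) k)
  have hX : (fun ω => (∑ i ∈ Icc 1 n, T i ω) - ∑ i ∈ Icc (κ ω + 1) n, T i ω) =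
      fun ω => ∑ i ∈ Icc 1 (κ ω), T i ω :=
    funext fun ω => sum_Icc_one_sub_sum_Icc_succ _ (by have := mem_Icc.mp (hκrange ω); omega)
  have hvar := variance_sum_Icc_comp hTmeas hTindep hlaw hκmeas hκrange
    (fun k hk => by have := mem_Icc.mp hk; omega) hindep
  have hsum (x : ℕ → ℝ) : ∑ k ∈ Icc 1 (n - 1), P.real {ω | κ ω = k} * x k =
      ∑ k ∈ Icc 1 (n - 1), yuleWeight n k * x k :=
    sum_congr rfl fun k hk => by rw [hprob k hk]
  simp only [hsum, sum_yuleWeight_sub_sq_eq_sharedPathVariance hn] at hvar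
  subst hH1 hH2
  simp_rw [← genHarmonic_one_eq]
  exact ⟨by rw [hX, hvar]; rfl, tendsto_sharedPathVariance⟩
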